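/- Let $Q$ be a semiprimary ring. Then $Q$ satisfies the descending chain condition on finitely generated right ideals; in particular, $Q$ has a simple right ideal. -/

import Mathlib

/-!
Let `J` be the Jacobson radical, so `J ^ n = 0` and `Q / J` is semisimple. For a descending
chain `g₀ ⊇ g₁ ⊇ ⋯` of finitely generated right ideals, `gₖ + J ^ m` stabilizes, by induction
on `m`: once `gₖ + J ^ m = g_N + J ^ m` for `k ≥ N`, we get `g_N J ⊆ gₖ + J ^ (m + 1)`, so
`gₖ + J ^ (m + 1)` lies between `g_N J + J ^ (m + 1)` and `g_N + J ^ (m + 1)`. The quotient of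
these two is a finitely generated `Q / J`-module, hence Artinian. For `m = n` this is the
descending chain condition. A minimal nonzero finitely generated right ideal is simple, since
every nonzero right ideal contains a nonzero cyclic one.
-/

/-- A ring is semiprimary if its Jacobson radical `J` is nilpotent and `R/J` is
semisimple Artinian. -/
def IsSemiprimaryRing' (R : Type*) [Ring R] : Prop :=
  (∃ n : ℕ, ∀ x : Fin n → R, (∀ i, x i ∈ (⊥ : TwoSidedIdeal R).jacobson) →
      (List.ofFn x).prod = 0) ∧
    IsSemisimpleRing ((⊥ : TwoSidedIdeal R).jacobson).ringCon.Quotient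

namespace Ideal

variable {R : Type*} [Ring R] {I : Ideal R}

theorem pow_eq_bot_of_forall_ofFn_prod_eq_zero {n : ℕ}
    (h : ∀ w : Fin n → R, (∀ i, w i ∈ I) → (List.ofFn w).prod = 0) : I ^ n = ⊥ := by
  suffices key : ∀ m k (w : Fin k → R), (∀ i, w i ∈ I) → m + k = n →
      ∀ x ∈ I ^ m, x * (List.ofFn w).prod = 0 by
    refine eq_bot_iff.mpr fun x hx ↦ ?_
    simpa using key n 0 Fin.elim0 (fun i ↦ i.elim0) rfl x hx
  intro m
  induction m with
  | zero =>
    rintro k w hw rfl x -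
    rw [zero_add] at h
    rw [h w hw, mul_zero]
  | succ m ih =>
    intro k w hw hmk x hx
    rw [Submodule.pow_succ] at hx
    refine Submodule.mul_induction_on hx (fun r hr s hs ↦ ?_) fun x y hx hy ↦ by
      rw [add_mul, hx, hy, add_zero]
    have hcons := ih (k + 1) (Fin.cons s w) (Fin.cases hs hw) (by omega) r hr
    rwa [List.ofFn_succ, List.prod_cons, Fin.cons_zero, ← mul_assoc] at hcons

end Ideal

namespace Submodule

variable {R M : Type*} [Ring R] [AddCommGroup M] [Module R M]

theorem isArtinian_of_fg_of_smul_eq_bot {I : Ideal R} [I.IsTwoSided] [IsArtinianRing (R ⧸ I)]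
    {N : Submodule R M} (hN : N.FG) (hIN : I • N = ⊥) : IsArtinian R N := by
  have htors : Module.IsTorsionBySet R N I := by
    rw [Module.isTorsionBySet_iff_subset_annihilator]
    exact le_annihilator_iff.mpr hIN
  let := htors.module
  have : Module.Finite R N := Module.Finite.iff_fg.mpr hN
  have : Module.Finite (R ⧸ I) N := Module.Finite.of_restrictScalars_finite R _ _
  exact (htors.semilinearMap.isArtinian_iff_of_bijective Function.bijective_id).mpr inferInstance

theorem exists_eq_of_antitone_of_le_of_isArtinian {A B : Submodule R M}
    [IsArtinian R (A.map B.mkQ)] {g : ℕ → Submodule R M} (hg : Antitone g)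
    (hBg : ∀ k, B ≤ g k) (hgA : ∀ k, g k ≤ A) : ∃ N, ∀ k, N ≤ k → g k = g N := by
  set A' := A.map B.mkQ
  let f : ℕ →o (Submodule R A')ᵒᵈ :=
    ⟨fun k ↦ ((g k).map B.mkQ).comap A'.subtype, fun _ _ hkl ↦
      comap_mono (map_mono (hg hkl))⟩
  have hg_eq : ∀ k, g k = ((f k).map A'.subtype).comap B.mkQ := fun k ↦ by
    change g k = ((((g k).map B.mkQ).comap A'.subtype).map A'.subtype).comap B.mkQ
    rw [map_comap_subtype, inf_eq_right.mpr (map_mono (hgA k)), comap_map_mkQ,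
      sup_eq_right.mpr (hBg k)]
  obtain ⟨N, hN⟩ := IsArtinian.monotone_stabilizes f
  exact ⟨N, fun k hk ↦ by rw [hg_eq k, hg_eq N, hN k hk]⟩

variable {I : Ideal R} [I.IsTwoSided] [IsArtinianRing (R ⧸ I)]

theorem exists_sup_eq_of_smul_le {L L' : Submodule R M} (hL : I • L ≤ L')
    {g : ℕ → Submodule R M} (hfg : ∀ k, (g k).FG) (hg : Antitone g)
    (hstab : ∃ N, ∀ k, N ≤ k → g k ⊔ L = g N ⊔ L) :
    ∃ N, ∀ k, N ≤ k → g k ⊔ L' = g N ⊔ L' := by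
  obtain ⟨N, hN⟩ := hstab
  set B := I • g N ⊔ L'
  have hA : IsArtinian R ((g N ⊔ B).map B.mkQ) := by
    refine isArtinian_of_fg_of_smul_eq_bot (I := I) ?_ ?_
    · rw [map_sup, mkQ_map_self, sup_bot_eq]
      exact (hfg N).map _
    · have hIA : I • (g N ⊔ B) ≤ B := by
        rw [smul_sup]
        exact sup_le le_sup_left smul_le_right
      rw [← map_smul'', eq_bot_iff, ← mkQ_map_self B]
      exact map_mono hIA
  have hB : ∀ k, B ≤ g (N + k) ⊔ L' := fun k ↦ by
    have hgN : g N ≤ g (N + k) ⊔ L := le_sup_left.trans (hN (N + k) le_self_add).ge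
    refine sup_le ?_ le_sup_right
    calc I • g N ≤ I • (g (N + k) ⊔ L) := smul_mono_right I hgN
      _ = I • g (N + k) ⊔ I • L := smul_sup I _ _
      _ ≤ g (N + k) ⊔ L' := sup_le_sup smul_le_right hL
  obtain ⟨N', hN'⟩ := exists_eq_of_antitone_of_le_of_isArtinian (A := g N ⊔ B)
    (g := fun k ↦ g (N + k) ⊔ L') (fun k l hkl ↦ sup_le_sup_right (hg (by omega)) _) hB
    (fun k ↦ sup_le_sup (hg le_self_add) le_sup_right)
  refine ⟨N + N', fun k hk ↦ ?_⟩
  obtain ⟨d, rfl⟩ := Nat.exists_eq_add_of_le hk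
  simpa only [add_assoc] using hN' (N' + d) le_self_add

theorem exists_sup_pow_smul_top_eq (m : ℕ) {g : ℕ → Submodule R M} (hfg : ∀ k, (g k).FG)
    (hg : Antitone g) :
    ∃ N, ∀ k, N ≤ k → g k ⊔ I ^ m • ⊤ = g N ⊔ I ^ m • ⊤ := by
  induction m with
  | zero => exact ⟨0, fun k _ ↦ by simp [Submodule.pow_zero, Ideal.one_eq_top]⟩
  | succ m ih =>
    refine exists_sup_eq_of_smul_le (I := I) ?_ hfg hg ih
    rw [Ideal.IsTwoSided.pow_succ, Submodule.mul_smul]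

theorem antitone_chain_condition_fg_of_isNilpotent (hI : IsNilpotent I)
    {g : ℕ → Submodule R M} (hfg : ∀ k, (g k).FG) (hg : Antitone g) :
    ∃ N, ∀ k, N ≤ k → g k = g N := by
  obtain ⟨n, hn⟩ := hI
  simpa [hn, zero_eq_bot] using exists_sup_pow_smul_top_eq (I := I) n hfg hg

theorem exists_isAtom_of_antitone_chain_condition_fg [Nontrivial M]
    (h : ∀ g : ℕ → Submodule R M, (∀ k, (g k).FG) → Antitone g →
      ∃ N, ∀ k, N ≤ k → g k = g N) :
    ∃ N : Submodule R M, IsAtom N := by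
  have : WellFoundedLT {N : Submodule R M // N.FG} := by
    change WellFoundedGT {N : Submodule R M // N.FG}ᵒᵈ
    refine wellFoundedGT_iff_monotone_chain_condition.mpr fun a ↦ ?_
    obtain ⟨N, hN⟩ := h (fun k ↦ (OrderDual.ofDual (a k)).1) (fun k ↦ (a k).2)
      fun _ _ hkl ↦ a.mono hkl
    exact ⟨N, fun k hk ↦ Subtype.ext (hN k hk).symm⟩
  obtain ⟨x, hx⟩ := exists_ne (0 : M)
  obtain ⟨⟨N, _⟩, hN, hmin⟩ :=
    wellFounded_lt.has_min {N : {N : Submodule R M // N.FG} | N.1 ≠ ⊥}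
    ⟨⟨R ∙ x, fg_span_singleton x⟩, span_singleton_eq_bot.not.mpr hx⟩
  refine ⟨N, hN, fun K hKN ↦ by_contra fun hK ↦ ?_⟩
  obtain ⟨y, hyK, hy⟩ := exists_mem_ne_zero_of_ne_bot hK
  exact hmin ⟨R ∙ y, fg_span_singleton y⟩ (span_singleton_eq_bot.not.mpr hy)
    (show R ∙ y < N from lt_of_le_of_lt ((span_singleton_le_iff_mem y K).mpr hyK) hKN)

end Submodule

namespace TwoSidedIdeal

variable {Q : Type*} [Ring Q] (J : TwoSidedIdeal Q)

theorem mem_ker_op_mk' {x : Qᵐᵒᵖ} :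
    x ∈ RingHom.ker (RingHom.op J.ringCon.mk') ↔ x.unop ∈ J := by
  rw [RingHom.mem_ker, mem_iff, ← RingCon.eq]
  simp

theorem antitone_chain_condition_fg_of_forall_ofFn_prod_eq_zero
    {M : Type*} [AddCommGroup M] [Module Qᵐᵒᵖ M] [IsArtinianRing J.ringCon.Quotientᵐᵒᵖ]
    {n : ℕ}
    (hn : ∀ x : Fin n → Q, (∀ i, x i ∈ J) → (List.ofFn x).prod = 0)
    {g : ℕ → Submodule Qᵐᵒᵖ M} (hfg : ∀ k, (g k).FG) (hg : Antitone g) :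
    ∃ N, ∀ k, N ≤ k → g k = g N := by
  set f := RingHom.op J.ringCon.mk'
  have hf : Function.Surjective f := fun y ↦ by
    obtain ⟨x, hx⟩ := J.ringCon.mk'_surjective y.unop
    exact ⟨MulOpposite.op x, by simp [f, hx]⟩
  have : IsArtinianRing (Qᵐᵒᵖ ⧸ RingHom.ker f) :=
    (RingHom.quotientKerEquivOfSurjective hf).symm.isArtinianRing
  have hnil : IsNilpotent (RingHom.ker f) := by
    refine ⟨n, Ideal.pow_eq_bot_of_forall_ofFn_prod_eq_zero fun w hw ↦ ?_⟩
    have hrev : (List.ofFn (MulOpposite.unop ∘ w)).reverse =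
        List.ofFn (MulOpposite.unop ∘ w ∘ Fin.rev) := by
      rw [List.ofFn_eq_map, ← List.map_reverse, List.finRange_reverse, List.map_map,
        List.ofFn_eq_map]
      rfl
    apply MulOpposite.unop_injective
    rw [MulOpposite.unop_list_prod, List.map_ofFn, hrev, MulOpposite.unop_zero]
    exact hn _ fun i ↦ J.mem_ker_op_mk'.mp (hw _)
  exact Submodule.antitone_chain_condition_fg_of_isNilpotent hnil hfg hg

end TwoSidedIdeal

theorem semiprimary_dcc_fg_right_ideals_and_simple_right_ideal
    {Q : Type*} [Ring Q] [Nontrivial Q] (hsp : IsSemiprimaryRing' Q) :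
    (∀ f : ℕ → Submodule Qᵐᵒᵖ Q, (∀ n, (f n).FG) → Antitone f →
        ∃ N, ∀ n, N ≤ n → f n = f N) ∧
      ∃ I : Submodule Qᵐᵒᵖ Q, I ≠ ⊥ ∧ ∀ J : Submodule Qᵐᵒᵖ Q, J ≤ I → J = ⊥ ∨ J = I := by
  obtain ⟨⟨n, hn⟩, _⟩ := hsp
  have dcc : ∀ f : ℕ → Submodule Qᵐᵒᵖ Q, (∀ n, (f n).FG) → Antitone f →
      ∃ N, ∀ n, N ≤ n → f n = f N := fun f hfg hf ↦
    TwoSidedIdeal.antitone_chain_condition_fg_of_forall_ofFn_prod_eq_zero _ hn hfg hf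
  obtain ⟨I, hI⟩ := Submodule.exists_isAtom_of_antitone_chain_condition_fg dcc
  exact ⟨dcc, I, hI.1, fun J hJ ↦ hI.le_iff.mp hJ⟩
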